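/- Let m₀, A ∈ ℝ³ with ‖m₀‖ = 1, ⟨A, m₀⟩ = 0, and A ≠ 0, let σ ∈ ℝ, set ω := A + σ m₀, and define the curve m(t) := exp(t · skew(ω)) m₀. Then m'(0) = A × m₀ with ‖m'(0)‖ = ‖A‖, m₀ × m'(0) = A, and the geodesic curvature of this circular trajectory at t = 0 satisfies ⟨m''(0), m₀ × m'(0)⟩ / ‖m'(0)‖³ = σ / ‖A‖. -/

import Mathlib

/-!
The curve `m` solves `m' = ω × m`, so `m'(0) = ω × m₀` and `m''(0) = ω × (ω × m₀)`. Since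
`ω × m₀ = A × m₀`, the first three claims are the vector triple product expansion for `A ⊥ m₀`
with `‖m₀‖ = 1`. For the curvature, the same expansion gives
`⟪ω × (ω × m₀), A⟫ = ⟪ω, m₀⟫ ⟪ω, A⟫ - ‖ω‖² ⟪m₀, A⟫ = σ ‖A‖²`.
-/

open Matrix
open scoped RealInnerProductSpace

noncomputable section

/-- `skew3 ξ` is the skew-symmetric matrix with `skew3 ξ *ᵥ x = ξ × x`. -/
def skew3 (ξ : Fin 3 → ℝ) : Matrix (Fin 3) (Fin 3) ℝ :=
  !![0, -ξ 2, ξ 1; ξ 2, 0, -ξ 0; -ξ 1, ξ 0, 0]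

/-- The cross product on `ℝ³` (modelled as `EuclideanSpace ℝ (Fin 3)`). -/
def cross (a b : EuclideanSpace ℝ (Fin 3)) : EuclideanSpace ℝ (Fin 3) :=
  WithLp.toLp 2 ![a 1 * b 2 - a 2 * b 1, a 2 * b 0 - a 0 * b 2, a 0 * b 1 - a 1 * b 0]

section MatrixExp

variable {𝕂 n : Type*} [RCLike 𝕂] [Fintype n] [DecidableEq n]

-- Any normed algebra structure on matrices will do: `NormedSpace.exp` only sees the topology.
attribute [local instance] Matrix.linftyOpNormedRing Matrix.linftyOpNormedAlgebra

theorem hasDerivAt_toLp_exp_smul_mulVec (M : Matrix n n 𝕂) (v : EuclideanSpace 𝕂 n) (t : 𝕂) :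
    HasDerivAt (fun s : 𝕂 ↦ WithLp.toLp 2 (NormedSpace.exp (s • M) *ᵥ v))
      (WithLp.toLp 2 (NormedSpace.exp (t • M) *ᵥ (M *ᵥ v)) : EuclideanSpace 𝕂 n) t := by
  let L : Matrix n n 𝕂 →ₗ[𝕂] EuclideanSpace 𝕂 n :=
    { toFun X := WithLp.toLp 2 (X *ᵥ v)
      map_add' X Y := by simp [add_mulVec]
      map_smul' c X := by simp [smul_mulVec] }
  rw [mulVec_mulVec]
  exact L.toContinuousLinearMap.hasFDerivAt.comp_hasDerivAt t (hasDerivAt_exp_smul_const M t)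

end MatrixExp

theorem cross_eq_toLp_crossProduct (a b : EuclideanSpace ℝ (Fin 3)) :
    cross a b = WithLp.toLp 2 (a.ofLp ⨯₃ b.ofLp) := by
  rw [cross_apply]
  rfl

theorem real_inner_eq_dotProduct {ι : Type*} [Fintype ι] (x y : EuclideanSpace ℝ ι) :
    ⟪x, y⟫ = x.ofLp ⬝ᵥ y.ofLp := by
  rw [EuclideanSpace.inner_eq_star_dotProduct, dotProduct_comm]
  rfl

theorem toLp_skew3_mulVec (ξ x : EuclideanSpace ℝ (Fin 3)) :
    WithLp.toLp 2 (skew3 ξ *ᵥ x) = cross ξ x := by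
  ext i
  fin_cases i <;> simp [skew3, cross, mulVec, dotProduct, Fin.sum_univ_three] <;> ring

theorem cross_add_smul_self_left (a b : EuclideanSpace ℝ (Fin 3)) (c : ℝ) :
    cross (a + c • b) b = cross a b := by
  simp only [cross_eq_toLp_crossProduct, WithLp.ofLp_add, WithLp.ofLp_smul, map_add, map_smul,
    LinearMap.add_apply, LinearMap.smul_apply, cross_self, smul_zero, add_zero]

theorem cross_cross_eq_inner_smul_sub_inner_smul (a b c : EuclideanSpace ℝ (Fin 3)) :
    cross a (cross b c) = ⟪a, c⟫ • b - ⟪a, b⟫ • c := by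
  simp only [cross_eq_toLp_crossProduct, real_inner_eq_dotProduct, cross_cross_eq_smul_sub_smul',
    dotProduct_comm b.ofLp]
  rfl

theorem norm_cross_sq (a b : EuclideanSpace ℝ (Fin 3)) :
    ‖cross a b‖ ^ 2 = ‖a‖ ^ 2 * ‖b‖ ^ 2 - ⟪a, b⟫ ^ 2 := by
  simp only [← real_inner_self_eq_norm_sq, real_inner_eq_dotProduct, cross_eq_toLp_crossProduct,
    cross_dot_cross, dotProduct_comm b.ofLp a.ofLp]
  ring

theorem norm_cross_of_inner_eq_zero {a b : EuclideanSpace ℝ (Fin 3)} (h : ⟪a, b⟫ = 0) :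
    ‖cross a b‖ = ‖a‖ * ‖b‖ := by
  rw [← sq_eq_sq₀ (norm_nonneg _) (by positivity), norm_cross_sq, h, mul_pow]
  ring

theorem geodesic_curvature_of_circular_update_general
    (m₀ A : EuclideanSpace ℝ (Fin 3)) (hm₀ : ‖m₀‖ = 1) (hA : ⟪A, m₀⟫ = 0)
    (σ : ℝ) (ω : EuclideanSpace ℝ (Fin 3)) (hω : ω = A + σ • m₀)
    (m : ℝ → EuclideanSpace ℝ (Fin 3))
    (hm : ∀ t : ℝ,
      m t = (WithLp.toLp 2 (NormedSpace.exp (t • skew3 ω) *ᵥ m₀) : EuclideanSpace ℝ (Fin 3))) :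
    deriv m 0 = cross A m₀ ∧
    ‖deriv m 0‖ = ‖A‖ ∧
    cross m₀ (deriv m 0) = A ∧
    ⟪deriv (deriv m) 0, cross m₀ (deriv m 0)⟫ / ‖deriv m 0‖ ^ 3 = σ / ‖A‖ := by
  have hm' : deriv m = fun t ↦ WithLp.toLp 2 (NormedSpace.exp (t • skew3 ω) *ᵥ (skew3 ω *ᵥ m₀)) :=
    funext fun t ↦ by
      rw [funext hm]
      exact (hasDerivAt_toLp_exp_smul_mulVec _ m₀ t).deriv
  have hm'_zero : deriv m 0 = cross A m₀ := by
    simp only [hm', zero_smul, NormedSpace.exp_zero, one_mulVec]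
    rw [toLp_skew3_mulVec, hω, cross_add_smul_self_left]
  have hm''_zero : deriv (deriv m) 0 = cross ω (cross ω m₀) := by
    rw [hm', (hasDerivAt_toLp_exp_smul_mulVec _ (WithLp.toLp 2 (skew3 ω *ᵥ m₀)) 0).deriv,
      zero_smul, NormedSpace.exp_zero, one_mulVec, toLp_skew3_mulVec, toLp_skew3_mulVec]
  have hm₀_self : ⟪m₀, m₀⟫ = 1 := by rw [real_inner_self_eq_norm_sq, hm₀, one_pow]
  have hm₀_A : ⟪m₀, A⟫ = 0 := by rw [real_inner_comm, hA]
  have hω_m₀ : ⟪ω, m₀⟫ = σ := by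
    rw [hω, inner_add_left, real_inner_smul_left, hA, hm₀_self, zero_add, mul_one]
  have hω_A : ⟪ω, A⟫ = ‖A‖ ^ 2 := by
    rw [hω, inner_add_left, real_inner_smul_left, hm₀_A, real_inner_self_eq_norm_sq, mul_zero,
      add_zero]
  have hA_normal : cross m₀ (cross A m₀) = A := by
    rw [cross_cross_eq_inner_smul_sub_inner_smul, hm₀_self, hm₀_A, one_smul, zero_smul, sub_zero]
  have hcurv : ⟪cross ω (cross ω m₀), A⟫ = σ * ‖A‖ ^ 2 := by
    rw [cross_cross_eq_inner_smul_sub_inner_smul, inner_sub_left, real_inner_smul_left,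
      real_inner_smul_left, hω_m₀, hω_A, hm₀_A, mul_zero, sub_zero]
  have hnorm : ‖cross A m₀‖ = ‖A‖ := by rw [norm_cross_of_inner_eq_zero hA, hm₀, mul_one]
  refine ⟨hm'_zero, hm'_zero ▸ hnorm, hm'_zero ▸ hA_normal, ?_⟩
  rw [hm''_zero, hm'_zero, hA_normal, hcurv, hnorm]
  rcases eq_or_ne ‖A‖ 0 with h | h
  · simp [h]
  · field_simp

/-- For the rigid rotation `m (t) = exp (t skew (A + σ m₀)) m₀` of a unit vector `m₀` about
the axis `ω = A + σ m₀` (with `A ⊥ m₀`, `A ≠ 0`), one has `m' (0) = A × m₀`,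
`‖m' (0)‖ = ‖A‖`, `m₀ × m' (0) = A`, and the geodesic curvature of the circular trajectory
at `t = 0` is `⟨m'' (0), m₀ × m' (0)⟩ / ‖m' (0)‖³ = σ / ‖A‖`. -/
theorem geodesic_curvature_of_circular_update
    (m₀ A : EuclideanSpace ℝ (Fin 3)) (hm₀ : ‖m₀‖ = 1) (hA : ⟪A, m₀⟫ = 0) (hA0 : A ≠ 0)
    (σ : ℝ) (ω : EuclideanSpace ℝ (Fin 3)) (hω : ω = A + σ • m₀)
    (m : ℝ → EuclideanSpace ℝ (Fin 3))
    (hm : ∀ t : ℝ,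
      m t = (WithLp.toLp 2 (NormedSpace.exp (t • skew3 ω) *ᵥ m₀) : EuclideanSpace ℝ (Fin 3))) :
    deriv m 0 = cross A m₀ ∧
    ‖deriv m 0‖ = ‖A‖ ∧
    cross m₀ (deriv m 0) = A ∧
    ⟪deriv (deriv m) 0, cross m₀ (deriv m 0)⟫ / ‖deriv m 0‖ ^ 3 = σ / ‖A‖ :=
  geodesic_curvature_of_circular_update_general m₀ A hm₀ hA σ ω hω m hm
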